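/- Let 𝕜 be an RCLike field (ℝ or ℂ), let n ≥ 1, let V : Fin n → Submodule 𝕜 (EuclideanSpace 𝕜 (Fin 2)) be pairwise generic, and let F : (Fin n → Fin n) → Bool be any function. Then there exists a quantum-logic term t in n + n variables such that for every k : Fin n → Fin n, eval t (Fin.append V (V ∘ k)) = ⊤ if F k = true and eval t (Fin.append V (V ∘ k)) = ⊥ if F k = false. -/

import Mathlib

/-- A quantum-logic term in `n` variables. -/
inductive Term (n : ℕ) : Type
  | var : Fin n → Term n
  | neg : Term n → Term n
  | inf : Term n → Term n → Term n
  | sup : Term n → Term n → Term n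

/-- The value of a quantum-logic term under an assignment of subspaces
to the variables.  Negation is interpreted as orthogonal complement. -/
def Term.eval {n : ℕ} {𝕜 E : Type*} [RCLike 𝕜] [NormedAddCommGroup E]
    [InnerProductSpace 𝕜 E] : Term n → (Fin n → Submodule 𝕜 E) → Submodule 𝕜 E
  | .var i, U => U i
  | .neg t, U => (t.eval U)ᗮ
  | .inf s t, U => s.eval U ⊓ t.eval U
  | .sup s t, U => s.eval U ⊔ t.eval U

/-- A family of subspaces is pairwise generic. -/
def PairwiseGeneric {ι : Type*} {𝕜 E : Type*} [RCLike 𝕜] [NormedAddCommGroup E]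
    [InnerProductSpace 𝕜 E] (U : ι → Submodule 𝕜 E) : Prop :=
  (∀ i, U i ≠ ⊥ ∧ U i ≠ ⊤) ∧
  ∀ i j, i ≠ j →
    U i ⊓ U j = ⊥ ∧ U i ⊓ (U j)ᗮ = ⊥ ∧ (U i)ᗮ ⊓ (U j)ᗮ = ⊥

/-!
Call `P : κ → Prop` realized by a term `t` on assignments `A : κ → Fin m → Submodule 𝕜 E` when
`t` evaluates to `⊤` on `A k` for `P k` and to `⊥` otherwise. On `{⊥, ⊤}` the lattice operations
are Boolean, so realized predicates are closed under finite conjunction and disjunction. Pairwise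
genericity of `V` realizes each atom `k j = i` on the assignments `Fin.append V (V ∘ k)`; hence
`k = k₀` is realized by a conjunction over `j`, and `F k = true` by the disjunction of these over
the `k₀` with `F k₀ = true`.
-/

namespace Submodule

variable {𝕜 E : Type*} [RCLike 𝕜] [NormedAddCommGroup E] [InnerProductSpace 𝕜 E]
  [FiniteDimensional 𝕜 E]

theorem sup_eq_top_of_orthogonal_inf_orthogonal_eq_bot {K L : Submodule 𝕜 E}
    (h : Kᗮ ⊓ Lᗮ = ⊥) : K ⊔ L = ⊤ :=
  orthogonal_eq_bot_iff.mp (by rwa [← inf_orthogonal])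

theorem sup_inf_sup_orthogonal_eq_top {K L : Submodule 𝕜 E} (h₁ : Kᗮ ⊓ Lᗮ = ⊥)
    (h₂ : Kᗮ ⊓ L = ⊥) : (K ⊔ L) ⊓ (K ⊔ Lᗮ) = ⊤ := by
  rw [sup_eq_top_of_orthogonal_inf_orthogonal_eq_bot h₁,
    sup_eq_top_of_orthogonal_inf_orthogonal_eq_bot (by rwa [orthogonal_orthogonal]), inf_top_eq]

end Submodule

namespace Term

variable {m : ℕ} {𝕜 E : Type*} [RCLike 𝕜] [NormedAddCommGroup E] [InnerProductSpace 𝕜 E]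

def bot (v : Fin m) : Term m := .inf (.var v) (.neg (.var v))

def top (v : Fin m) : Term m := .neg (bot v)

def listSup (v : Fin m) (l : List (Term m)) : Term m := l.foldr .sup (bot v)

def listInf (v : Fin m) (l : List (Term m)) : Term m := l.foldr .inf (top v)

@[simp]
theorem eval_bot (v : Fin m) (U : Fin m → Submodule 𝕜 E) : (bot v).eval U = ⊥ :=
  Submodule.inf_orthogonal_eq_bot (U v)

@[simp]
theorem eval_top (v : Fin m) (U : Fin m → Submodule 𝕜 E) : (top v).eval U = ⊤ := by
  simp [top, eval]

def Realizes {κ : Type*} (t : Term m) (A : κ → Fin m → Submodule 𝕜 E) (P : κ → Prop) : Prop :=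
  ∀ k, (P k → t.eval (A k) = ⊤) ∧ (¬P k → t.eval (A k) = ⊥)

variable {κ : Type*} {A : κ → Fin m → Submodule 𝕜 E} {s t : Term m} {P Q : κ → Prop}

theorem Realizes.of_iff (ht : Realizes t A P) (hPQ : ∀ k, P k ↔ Q k) : Realizes t A Q := by
  simpa only [Realizes, hPQ] using ht

theorem realizes_bot (v : Fin m) : Realizes (bot v) A fun _ => False :=
  fun _ => ⟨False.elim, fun _ => eval_bot v _⟩

theorem realizes_top (v : Fin m) : Realizes (top v) A fun _ => True :=
  fun _ => ⟨fun _ => eval_top v _, fun h => (h trivial).elim⟩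

theorem Realizes.sup (hs : Realizes s A P) (ht : Realizes t A Q) :
    Realizes (.sup s t) A fun k => P k ∨ Q k := by
  intro k
  refine ⟨fun hk => ?_, fun hk => ?_⟩
  · rcases hk with hP | hQ
    · simp [eval, (hs k).1 hP]
    · simp [eval, (ht k).1 hQ]
  · rw [not_or] at hk
    simp [eval, (hs k).2 hk.1, (ht k).2 hk.2]

theorem Realizes.inf (hs : Realizes s A P) (ht : Realizes t A Q) :
    Realizes (.inf s t) A fun k => P k ∧ Q k := by
  intro k
  refine ⟨fun hk => ?_, fun hk => ?_⟩
  · simp [eval, (hs k).1 hk.1, (ht k).1 hk.2]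
  · rcases not_and_or.1 hk with hP | hQ
    · simp [eval, (hs k).2 hP]
    · simp [eval, (ht k).2 hQ]

theorem Realizes.listSup {ι : Type*} (v : Fin m) {l : List ι} {f : ι → Term m}
    {P : ι → κ → Prop} (h : ∀ i ∈ l, Realizes (f i) A (P i)) :
    Realizes (listSup v (l.map f)) A fun k => ∃ i ∈ l, P i k := by
  induction l with
  | nil => simpa [Term.listSup] using realizes_bot (A := A) v
  | cons a l ih =>
    simpa only [Term.listSup, List.map_cons, List.foldr_cons, List.mem_cons, exists_eq_or_imp] using
      (h a List.mem_cons_self).sup (ih fun i hi => h i (List.mem_cons_of_mem a hi))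

theorem Realizes.listInf {ι : Type*} (v : Fin m) {l : List ι} {f : ι → Term m}
    {P : ι → κ → Prop} (h : ∀ i ∈ l, Realizes (f i) A (P i)) :
    Realizes (listInf v (l.map f)) A fun k => ∀ i ∈ l, P i k := by
  induction l with
  | nil => simpa [Term.listInf] using realizes_top (A := A) v
  | cons a l ih =>
    simpa only [Term.listInf, List.map_cons, List.foldr_cons, List.mem_cons, forall_eq_or_imp] using
      (h a List.mem_cons_self).inf (ih fun i hi => h i (List.mem_cons_of_mem a hi))

variable {n : ℕ}

/-- With `i' ≠ i`, the test `(X ⊔ V i') ⊓ (X ⊔ (V i')ᗮ)` sends `X = V i` to `⊤` and `X = ⊥`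
to `⊥`; it is applied to `X = V i ⊓ V (k j)`, which is `V i` or `⊥` according as `k j = i`.
For `n = 1` there is no such `i'`, but then `k j = i` always holds. -/
noncomputable def coordEq (i j : Fin n) : Term (n + n) :=
  if h : ∃ i', i' ≠ i then
    let x : Term (n + n) := .inf (.var (Fin.castAdd n i)) (.var (Fin.natAdd n j))
    let w : Term (n + n) := .var (Fin.castAdd n h.choose)
    .inf (.sup x w) (.sup x (.neg w))
  else top (Fin.castAdd n i)

theorem realizes_coordEq [FiniteDimensional 𝕜 E] {V : Fin n → Submodule 𝕜 E}
    (hV : PairwiseGeneric V) (i j : Fin n) :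
    Realizes (coordEq i j) (fun k : Fin n → Fin n => Fin.append V (V ∘ k)) fun k => k j = i := by
  unfold coordEq
  split_ifs with h
  · have hi : h.choose ≠ i := h.choose_spec
    intro k
    simp only [eval, Fin.append_left, Fin.append_right, Function.comp_apply]
    constructor
    · intro hk
      rw [hk, inf_idem]
      exact Submodule.sup_inf_sup_orthogonal_eq_top (hV.2 i _ hi.symm).2.2
        (by rw [inf_comm]; exact (hV.2 _ i hi).2.1)
    · intro hk
      rw [(hV.2 i (k j) (Ne.symm hk)).1, bot_sup_eq, bot_sup_eq, Submodule.inf_orthogonal_eq_bot]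
  · push Not at h
    exact (realizes_top _).of_iff fun k => iff_of_true trivial (h (k j))

end Term

theorem exists_term_realizing_function {𝕜 : Type*} [RCLike 𝕜] {n : ℕ} (hn : 1 ≤ n)
    (V : Fin n → Submodule 𝕜 (EuclideanSpace 𝕜 (Fin 2)))
    (hV : PairwiseGeneric V) (F : (Fin n → Fin n) → Bool) :
    ∃ t : Term (n + n), ∀ k : Fin n → Fin n,
      (F k = true → t.eval (Fin.append V (V ∘ k)) = ⊤) ∧
      (F k = false → t.eval (Fin.append V (V ∘ k)) = ⊥) := by
  let v : Fin (n + n) := Fin.castAdd n ⟨0, hn⟩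
  let graph (k₀ : Fin n → Fin n) : Term (n + n) :=
    Term.listInf v ((List.finRange n).map fun j => Term.coordEq (k₀ j) j)
  have h_graph (k₀ : Fin n → Fin n) :
      (graph k₀).Realizes (fun k => Fin.append V (V ∘ k)) (· = k₀) :=
    (Term.Realizes.listInf v fun j _ => Term.realizes_coordEq hV (k₀ j) j).of_iff
      fun k => by simp [funext_iff]
  have h_F : Term.Realizes _ (fun k => Fin.append V (V ∘ k)) (F · = true) :=
    (Term.Realizes.listSup v (l := (Finset.univ.filter (F · = true)).toList)
      fun k₀ _ => h_graph k₀).of_iff fun k => by simp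
  exact ⟨_, fun k => ⟨(h_F k).1, fun hk => (h_F k).2 (by simp [hk])⟩⟩
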